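/- For all IPC formulas Q, X, Y, the formula QQ(X ⊃ Y) ⊃ (QQY ∨ QX) is a theorem of IPC, where QQ(X ⊃ Y) = [(X ⊃ Y) ⊃ Q] ⊃ Q, QQY = (Y ⊃ Q) ⊃ Q, QX = X ⊃ Q, and A ∨ B denotes (A ⊃ B) ⊃ B. -/
import Mathlib


/-- Formulas of the Implicational Propositional Calculus: propositional
variables and implication. -/
inductive IPCFormula : Type where
  | var : ℕ → IPCFormula
  | imp : IPCFormula → IPCFormula → IPCFormula

infixr:60 " ⊃' " => IPCFormula.imp

/-- Derivability from a set of hypotheses Γ in the Hilbert system with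
axiom schemes IPC1, IPC2, Peirce and the rule modus ponens. -/
inductive IPCDeriv : Set IPCFormula → IPCFormula → Prop where
  | hyp {Γ : Set IPCFormula} {X : IPCFormula} : X ∈ Γ → IPCDeriv Γ X
  | ipc1 {Γ : Set IPCFormula} (X Y : IPCFormula) :
      IPCDeriv Γ (X ⊃' (Y ⊃' X))
  | ipc2 {Γ : Set IPCFormula} (X Y Z : IPCFormula) :
      IPCDeriv Γ ((X ⊃' (Y ⊃' Z)) ⊃' ((X ⊃' Y) ⊃' (X ⊃' Z)))
  | peirce {Γ : Set IPCFormula} (X Y : IPCFormula) :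
      IPCDeriv Γ (((X ⊃' Y) ⊃' X) ⊃' X)
  | mp {Γ : Set IPCFormula} {X Y : IPCFormula} :
      IPCDeriv Γ (X ⊃' Y) → IPCDeriv Γ X → IPCDeriv Γ Y

/-- A theorem of IPC: derivable from no hypotheses. -/
def IPCThm (X : IPCFormula) : Prop := IPCDeriv ∅ X

/-- Disjunction defined within IPC: X ∨ Y := (X ⊃ Y) ⊃ Y. -/
def IPCFormula.disj (X Y : IPCFormula) : IPCFormula := (X ⊃' Y) ⊃' Y


lemma ipc_id (Γ : Set IPCFormula) (A : IPCFormula) : IPCDeriv Γ (A ⊃' A) :=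
  (IPCDeriv.ipc2 A (A ⊃' A) A).mp (IPCDeriv.ipc1 A (A ⊃' A)) |>.mp (IPCDeriv.ipc1 A A)

lemma ipc_ded {Γ : Set IPCFormula} {A B : IPCFormula}
    (h : IPCDeriv (insert A Γ) B) : IPCDeriv Γ (A ⊃' B) := by
  generalize hΔ : insert A Γ = Δ at h
  induction h with
  | hyp hm =>
    subst hΔ
    rcases hm with rfl | hm
    · exact ipc_id _ _
    · exact (IPCDeriv.ipc1 _ A).mp (IPCDeriv.hyp hm)
  | ipc1 X Y => exact (IPCDeriv.ipc1 _ A).mp (IPCDeriv.ipc1 X Y)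
  | ipc2 X Y Z => exact (IPCDeriv.ipc1 _ A).mp (IPCDeriv.ipc2 X Y Z)
  | peirce X Y => exact (IPCDeriv.ipc1 _ A).mp (IPCDeriv.peirce X Y)
  | mp _ _ ih1 ih2 =>
    exact ((IPCDeriv.ipc2 A _ _).mp ih1).mp ih2

theorem stmt_12 (Q X Y : IPCFormula) :
    IPCThm ((((X ⊃' Y) ⊃' Q) ⊃' Q) ⊃'
      IPCFormula.disj ((Y ⊃' Q) ⊃' Q) (X ⊃' Q)) := by
  apply ipc_ded
  apply ipc_ded
  apply ipc_ded
  -- Γ = {X, h2, h1}, goal Q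
  have hX : IPCDeriv (insert X (insert (((Y ⊃' Q) ⊃' Q) ⊃' (X ⊃' Q)) (insert (((X ⊃' Y) ⊃' Q) ⊃' Q) ∅))) X :=
    IPCDeriv.hyp (Set.mem_insert _ _)
  have h2 : IPCDeriv (insert X (insert (((Y ⊃' Q) ⊃' Q) ⊃' (X ⊃' Q)) (insert (((X ⊃' Y) ⊃' Q) ⊃' Q) ∅))) (((Y ⊃' Q) ⊃' Q) ⊃' (X ⊃' Q)) :=
    IPCDeriv.hyp (Set.mem_insert_of_mem _ (Set.mem_insert _ _))
  have h1 : IPCDeriv (insert X (insert (((Y ⊃' Q) ⊃' Q) ⊃' (X ⊃' Q)) (insert (((X ⊃' Y) ⊃' Q) ⊃' Q) ∅))) (((X ⊃' Y) ⊃' Q) ⊃' Q) :=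
    IPCDeriv.hyp (Set.mem_insert_of_mem _ (Set.mem_insert_of_mem _ (Set.mem_insert _ _)))
  have qqy : IPCDeriv (insert X (insert (((Y ⊃' Q) ⊃' Q) ⊃' (X ⊃' Q)) (insert (((X ⊃' Y) ⊃' Q) ⊃' Q) ∅))) ((Y ⊃' Q) ⊃' Q) := by
    apply ipc_ded
    apply IPCDeriv.mp (IPCDeriv.hyp (Set.mem_insert_of_mem _ (Set.mem_insert_of_mem _ (Set.mem_insert_of_mem _ (Set.mem_insert _ _)))))
    apply ipc_ded
    exact (IPCDeriv.hyp (Set.mem_insert_of_mem _ (Set.mem_insert _ _))).mp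
      ((IPCDeriv.hyp (Set.mem_insert _ _)).mp
        (IPCDeriv.hyp (Set.mem_insert_of_mem _ (Set.mem_insert_of_mem _ (Set.mem_insert _ _)))))
  exact (h2.mp qqy).mp hX
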